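/- Let F be a free group of finite rank n ≥ 2. Then there exists a subgroup J of F that is malnormal in F and free of rank 2, i.e. there is an injective group homomorphism from FreeGroup (Fin 2) into F whose range J satisfies: for every g ∈ F, g J g⁻¹ ∩ J ≠ {1} implies g ∈ J. -/

import Mathlib

/-- The conjugate subgroup `g H g⁻¹`. -/
def conjSubgroup {G : Type*} [Group G] (g : G) (H : Subgroup G) : Subgroup G :=
  H.map (MulAut.conj g).toMonoidHom

/-- A subgroup `H` of `G` is malnormal if `g H g⁻¹ ∩ H ≠ {1}` implies `g ∈ H`. -/
def IsMalnormal {G : Type*} [Group G] (H : Subgroup G) : Prop :=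
  ∀ g : G, conjSubgroup g H ⊓ H ≠ ⊥ → g ∈ H

/-!
`J` is generated by two of the free generators, i.e. it is the free factor `closure (of '' S)`,
and free factors are malnormal. Any `g` can be written `g = b * h` with `h ∈ J` and `b` a reduced
word that is empty or ends in a letter outside `S`. If `g ∉ J` then `b ≠ []`, and for
`1 ≠ x ∈ J` the word `b · x · b⁻¹` is already reduced, so `g x g⁻¹ = b (h x h⁻¹) b⁻¹` contains
a letter outside `S` and is not in `J`.
-/

namespace FreeGroup

open Subgroup

variable {α : Type*} {L b v : List (α × Bool)}

theorem mem_invRev_iff {l : α × Bool} : l ∈ invRev L ↔ (l.1, !l.2) ∈ L := by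
  obtain ⟨a, s⟩ := l
  simp [invRev]

theorem IsReduced.invRev (h : IsReduced L) : IsReduced (invRev L) := by
  classical
  rw [isReduced_iff_reduce_eq, reduce_invRev, h.reduce_eq]

theorem IsReduced.append (hb : IsReduced b) (hv : IsReduced v)
    (h : ∀ x ∈ b.getLast?, ∀ y ∈ v.head?, x.1 ≠ y.1) : IsReduced (b ++ v) :=
  List.isChain_append.2 ⟨hb, hv, fun x hx y hy hxy => absurd hxy (h x hx y hy)⟩

variable {S : Set α}

theorem isReduced_append_append_invRev (hb : IsReduced b) (hv : IsReduced v) (hv0 : v ≠ [])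
    (hbS : ∀ x ∈ b.getLast?, x.1 ∉ S) (hvS : ∀ y ∈ v, y.1 ∈ S) :
    IsReduced (b ++ v ++ invRev b) := by
  have hsep : ∀ {w : List (α × Bool)}, (∀ y ∈ w, y.1 ∈ S) →
      ∀ x ∈ b.getLast?, ∀ y ∈ w.head?, x.1 ≠ y.1 := fun hw x hx y hy hxy =>
    hbS x hx (hxy ▸ hw y (List.mem_of_mem_head? hy))
  have hbv : IsReduced (b ++ invRev v) :=
    hb.append hv.invRev (hsep fun y hy => hvS (y.1, !y.2) (mem_invRev_iff.1 hy))
  refine (hb.append hv (hsep hvS)).append_overlap ?_ hv0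
  simpa only [FreeGroup.invRev_append, invRev_invRev] using hbv.invRev

theorem mk_mem_closure_image_of (hL : ∀ l ∈ L, l.1 ∈ S) : mk L ∈ closure (of '' S) := by
  induction L with
  | nil => exact one_mem _
  | cons l L ih =>
    obtain ⟨a, s⟩ := l
    have ha : of a ∈ closure (of '' S) := subset_closure ⟨a, hL _ List.mem_cons_self, rfl⟩
    have hmk : mk [(a, s)] ∈ closure (of '' S) := by
      cases s
      · exact inv_mem ha
      · exact ha
    rw [← List.singleton_append, ← mul_mk]
    exact mul_mem hmk (ih fun l hl => hL l (List.mem_cons_of_mem _ hl))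

variable [DecidableEq α]

theorem mem_closure_image_of_iff {x : FreeGroup α} :
    x ∈ closure (of '' S) ↔ ∀ l ∈ x.toWord, l.1 ∈ S := by
  refine ⟨fun hx => ?_, fun hx => mk_toWord (x := x) ▸ mk_mem_closure_image_of hx⟩
  induction hx using closure_induction with
  | mem _ h =>
    obtain ⟨a, ha, rfl⟩ := h
    simpa [toWord_of] using ha
  | one => simp
  | mul x y _ _ hx hy =>
    intro l hl
    rcases List.mem_append.1 ((toWord_mul_sublist x y).mem hl) with h | h
    exacts [hx l h, hy l h]
  | inv x _ hx =>
    intro l hl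
    rw [toWord_inv, mem_invRev_iff] at hl
    exact hx (l.1, !l.2) hl

theorem exists_eq_mk_mul_mem_closure_image_of (g : FreeGroup α) :
    ∃ b : List (α × Bool), ∃ h ∈ closure (of '' S),
      IsReduced b ∧ (∀ x ∈ b.getLast?, x.1 ∉ S) ∧ g = mk b * h := by
  classical
  let p : α × Bool → Bool := fun l => l.1 ∈ S
  refine ⟨g.toWord.rdropWhile p, mk (g.toWord.rtakeWhile p),
    mk_mem_closure_image_of fun l hl => by simpa [p] using List.mem_rtakeWhile_imp hl,
    isReduced_toWord.infix (List.rdropWhile_prefix p _).isInfix, ?_, ?_⟩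
  · intro x hx
    have hne : g.toWord.rdropWhile p ≠ [] := by rintro h; simp [h] at hx
    rw [List.getLast?_eq_some_getLast hne, Option.mem_some_iff] at hx
    simpa [p, ← hx] using List.rdropWhile_last_not p g.toWord hne
  · rw [mul_mk, List.rdropWhile_append_rtakeWhile, mk_toWord]

theorem mk_mul_mul_inv_mk_notMem_closure_image_of {x : FreeGroup α}
    (hb : IsReduced b) (hb0 : b ≠ []) (hbS : ∀ y ∈ b.getLast?, y.1 ∉ S)
    (hx : x ∈ closure (of '' S)) (hx1 : x ≠ 1) :
    mk b * x * (mk b)⁻¹ ∉ closure (of '' S) := by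
  have hword : IsReduced (b ++ x.toWord ++ invRev b) :=
    isReduced_append_append_invRev hb isReduced_toWord (by simpa using hx1) hbS
      (mem_closure_image_of_iff.1 hx)
  have heq : mk b * x * (mk b)⁻¹ = mk (b ++ x.toWord ++ invRev b) := by
    rw [inv_mk, ← mul_mk, ← mul_mk, mk_toWord]
  rw [heq, mem_closure_image_of_iff, toWord_mk, hword.reduce_eq]
  intro hS
  exact hbS _ (List.getLast?_eq_some_getLast hb0) (hS _ (by simp [List.getLast_mem]))

theorem isMalnormal_closure_image_of (S : Set α) : IsMalnormal (closure (of '' S)) := by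
  intro g hg
  obtain ⟨_, ⟨⟨x, hx, rfl⟩, hgx⟩, hgx1⟩ := (bot_or_exists_ne_one _).resolve_left hg
  simp only [MulEquiv.toMonoidHom_eq_coe, MonoidHom.coe_coe, MulAut.conj_apply] at hgx hgx1
  obtain ⟨b, h, hh, hb, hbS, rfl⟩ := exists_eq_mk_mul_mem_closure_image_of (S := S) g
  rcases eq_or_ne b [] with rfl | hb0
  · simpa [← one_eq_mk] using hh
  have hx1 : h * x * h⁻¹ ≠ 1 := by
    rw [Ne, conj_eq_one_iff] at hgx1 ⊢
    exact hgx1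
  exact (mk_mul_mul_inv_mk_notMem_closure_image_of hb hb0 hbS
    (mul_mem (mul_mem hh hx) (inv_mem hh)) hx1 (by simpa [mul_assoc] using hgx)).elim

end FreeGroup

/-- A free group of rank `n ≥ 2` contains a malnormal subgroup that is free of rank 2. -/
theorem exists_malnormal_free_rank_two (n : ℕ) (hn : 2 ≤ n) :
    ∃ J : Subgroup (FreeGroup (Fin n)),
      IsMalnormal J ∧
      ∃ ψ : FreeGroup (Fin 2) →* FreeGroup (Fin n),
        Function.Injective ψ ∧ ψ.range = J := by
  let ψ := FreeGroup.map (Fin.castLE hn)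
  refine ⟨ψ.range, ?_, ψ, FreeGroup.map_injective (Fin.castLE_injective hn), rfl⟩
  rw [FreeGroup.range_map]
  exact FreeGroup.isMalnormal_closure_image_of _
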